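/- arXiv:1305.3903 — 5 statements merged into one kernel-verified Lean document; each statement's English description precedes it below -/
import Mathlib

section
/- Every semigroup identity satisfied by the monoid of n×n tropical matrices is balanced: let n ≥ 1 and let u, v be nonempty lists over Fin k (words in k variables). If for every assignment φ : Fin k → Matrix (Fin n) (Fin n) 𝕋 the tropical matrix products (u.map φ).prod and (v.map φ).prod are equal, then for every variable i ∈ Fin k the number of occurrences of i in u equals the number of occurrences of i in v. -/
/-!
Scalar matrices embed `𝕋` multiplicatively into the `n × n` tropical matrices (for `n ≥ 1`), so
every identity of the matrices holds in `𝕋` itself. Substituting the real number `1` for the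
variable `i` and the tropical unit `0` for all other variables turns the identity into
`1 ^ |u|ᵢ = 1 ^ |v|ᵢ` in `𝕋`, and a tropical power of `1` is `|u|ᵢ • 1 = |u|ᵢ` in `ℝ`.
-/

/-- The max-plus tropical semiring `𝕋 = ℝ ∪ {-∞}`, realized as `Tropical (WithTop ℝᵒᵈ)`:
tropical addition is `max`, tropical multiplication is `+`, and `⊤` corresponds to `-∞`. -/
abbrev Trop : Type := Tropical (WithTop ℝᵒᵈ)

open Matrix

def SatisfiesIdentity {α : Type*} (M : Type*) [Monoid M] (u v : List α) : Prop :=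
  ∀ φ : α → M, (u.map φ).prod = (v.map φ).prod

theorem List.prod_map_scalar {n α R : Type*} [Fintype n] [DecidableEq n] [Semiring R]
    (l : List α) (t : α → R) :
    (l.map fun j => scalar n (t j)).prod = scalar n (l.map t).prod := by
  rw [map_list_prod, List.map_map]
  rfl

namespace SatisfiesIdentity

variable {α : Type*} {u v : List α}

theorem of_matrix {n R : Type*} [Fintype n] [DecidableEq n] [Nonempty n] [Semiring R]
    (h : SatisfiesIdentity (Matrix n n R) u v) : SatisfiesIdentity R u v := fun t => by
  have := h fun j => scalar n (t j)
  rwa [List.prod_map_scalar, List.prod_map_scalar, scalar_inj] at this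

theorem count_eq [DecidableEq α] {M : Type*} [Monoid M] {g : M}
    (hg : Function.Injective (g ^ · : ℕ → M)) (h : SatisfiesIdentity M u v) (i : α) :
    u.count i = v.count i := by
  have := h fun j => if j = i then g else 1
  rw [List.prod_map_eq_pow_single i _ (by simp +contextual),
    List.prod_map_eq_pow_single i _ (by simp +contextual), if_pos rfl] at this
  exact hg this

end SatisfiesIdentity

theorem Tropical.pow_injective_trop_one :
    Function.Injective (trop ((OrderDual.toDual (1 : ℝ) : ℝᵒᵈ) : WithTop ℝᵒᵈ) ^ · : ℕ → Trop) := by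
  intro m m' hm
  simp only [← trop_nsmul, trop_inj_iff, ← WithTop.coe_nsmul, WithTop.coe_inj] at hm
  simpa using congrArg OrderDual.ofDual hm

theorem tropical_matrix_identity_balanced_general {n k : ℕ} (hn : 1 ≤ n)
    (u v : List (Fin k))
    (h : ∀ φ : Fin k → Matrix (Fin n) (Fin n) Trop, (u.map φ).prod = (v.map φ).prod) :
    ∀ i : Fin k, u.count i = v.count i :=
  have : Nonempty (Fin n) := ⟨⟨0, hn⟩⟩
  SatisfiesIdentity.count_eq Tropical.pow_injective_trop_one (SatisfiesIdentity.of_matrix h)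

/-- every semigroup identity satisfied by the monoid of `n × n` tropical
matrices (`n ≥ 1`) is balanced: each variable occurs the same number of times on both
sides. -/
theorem tropical_matrix_identity_balanced {n k : ℕ} (hn : 1 ≤ n)
    (u v : List (Fin k)) (hu : u ≠ []) (hv : v ≠ [])
    (h : ∀ φ : Fin k → Matrix (Fin n) (Fin n) Trop, (u.map φ).prod = (v.map φ).prod) :
    ∀ i : Fin k, u.count i = v.count i :=
  tropical_matrix_identity_balanced_general hn u v h
end

section
/- Let X and Y be 2×2 upper triangular tropical matrices that are diagonally equivalent (X₁₁ = Y₁₁ and X₂₂ = Y₂₂). Then X·Y·X·X·Y = X·Y·Y·X·Y, i.e., setting M = X·Y one has M·X·M = M·Y·M. -/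
theorem Matrix.eta_fin_two_of_apply_one_zero {α : Type*} [Zero α] (A : Matrix (Fin 2) (Fin 2) α)
    (h : A 1 0 = 0) : A = !![A 0 0, A 0 1; 0, A 1 1] := by
  rw [← h]
  exact Matrix.eta_fin_two A

namespace Tropical

variable {R : Type*} [LinearOrderedAddCommMonoidWithTop R]

theorem add_pow_le_pow_mul_pow (x y : Tropical R) (m n : ℕ) :
    x ^ (m + n) + y ^ (m + n) ≤ x ^ m * y ^ n := by
  rw [← add_pow, pow_add]
  exact mul_le_mul' (pow_le_pow_left' (min_le_left x y) m) (pow_le_pow_left' (min_le_right x y) n)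

theorem mul_pow_three_add_pow_three_le {a c e q : Tropical R} (hq : q ≤ a * e ∨ q ≤ e * c) :
    q * (a ^ 3 + c ^ 3) ≤ a ^ 2 * c ^ 2 * e := by
  rcases hq with hq | hq
  · calc q * (a ^ 3 + c ^ 3) ≤ a * e * (a ^ 1 * c ^ 2) :=
          mul_le_mul' hq (add_pow_le_pow_mul_pow a c 1 2)
      _ = a ^ 2 * c ^ 2 * e := by ring
  · calc q * (a ^ 3 + c ^ 3) ≤ e * c * (a ^ 2 * c ^ 1) :=
          mul_le_mul' hq (add_pow_le_pow_mul_pow a c 2 1)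
      _ = a ^ 2 * c ^ 2 * e := by ring

theorem upper_fin_two_mul_mul_mul_eq (a b c d : Tropical R) :
    !![a, b; 0, c] * !![a, d; 0, c] * !![a, b; 0, c] * (!![a, b; 0, c] * !![a, d; 0, c]) =
      !![a, b; 0, c] * !![a, d; 0, c] * !![a, d; 0, c] * (!![a, b; 0, c] * !![a, d; 0, c]) := by
  set q := a * d + b * c
  have entry (e : Tropical R) (hq : q ≤ a * e ∨ q ≤ e * c) :
      a * a * a * q + (a * a * e + q * c) * (c * c) = q * (a ^ 3 + c ^ 3) :=
    calc a * a * a * q + (a * a * e + q * c) * (c * c)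
        = q * (a ^ 3 + c ^ 3) + a ^ 2 * c ^ 2 * e := by ring
      _ = q * (a ^ 3 + c ^ 3) := add_eq_left (mul_pow_three_add_pow_three_le hq)
  simp only [Matrix.mul_fin_two, mul_zero, zero_mul, add_zero, zero_add]
  rw [entry b (Or.inr (min_le_right _ _)), entry d (Or.inl (min_le_left _ _))]

end Tropical

/-- diagonally equivalent upper triangular `2 × 2` tropical matrices `X`, `Y`
satisfy `XY·X·XY = XY·Y·XY`. -/
theorem two_by_two_diag_equiv_identity (X Y : Matrix (Fin 2) (Fin 2) Trop)
    (hX : ∀ i j : Fin 2, j < i → X i j = 0)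
    (hY : ∀ i j : Fin 2, j < i → Y i j = 0)
    (hdiag : ∀ i : Fin 2, X i i = Y i i) :
    (X * Y) * X * (X * Y) = (X * Y) * Y * (X * Y) := by
  rw [Y.eta_fin_two_of_apply_one_zero (hY 1 0 Fin.zero_lt_one),
    X.eta_fin_two_of_apply_one_zero (hX 1 0 Fin.zero_lt_one), hdiag 0, hdiag 1]
  exact Tropical.upper_fin_two_mul_mul_mul_eq _ _ _ _
end

section
/- Any two 2×2 upper triangular tropical matrices A and B satisfy the semigroup identity A·B²·A · A·B · A·B²·A = A·B²·A · B·A · A·B²·A, i.e., setting M = A·B·B·A one has M·(A·B)·M = M·(B·A)·M. -/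
namespace Tropical

theorem pow_add_add_pow_add_le_pow_mul_pow {R : Type*} [AddCommMonoid R] [LinearOrder R]
    [IsOrderedAddMonoid R] (x y : Tropical R) (m n : ℕ) :
    x ^ (m + n) + y ^ (m + n) ≤ x ^ m * y ^ n := by
  rcases le_total x y with h | h
  · calc x ^ (m + n) + y ^ (m + n) ≤ x ^ (m + n) := min_le_left _ _
      _ = x ^ m * x ^ n := pow_add x m n
      _ ≤ x ^ m * y ^ n := mul_le_mul_right (pow_le_pow_left' h n) _
  · calc x ^ (m + n) + y ^ (m + n) ≤ y ^ (m + n) := min_le_right _ _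
      _ = y ^ m * y ^ n := pow_add y m n
      _ ≤ x ^ m * y ^ n := mul_le_mul_left (pow_le_pow_left' h m) _

variable {R : Type*} [LinearOrderedAddCommMonoidWithTop R]

/-- With `A = !![a, b; 0, c]` and `B = !![d, e; 0, f]`, the first factor is `(AB²A)₀₁` and the
two sides are the corner entries of `AB²A · AB · AB²A` and `AB²A · BA · AB²A`. -/
theorem sandwich_corner_eq (a b c d e f : Tropical R) :
    (a * d ^ 2 * b + a * d * e * c + (a * e * f * c + b * f ^ 2 * c)) * ((a * d) ^ 3 + (c * f) ^ 3)
        + (a * d) ^ 2 * (c * f) ^ 2 * (a * e + b * f) =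
      (a * d ^ 2 * b + a * d * e * c + (a * e * f * c + b * f ^ 2 * c)) *
          ((a * d) ^ 3 + (c * f) ^ 3) + (a * d) ^ 2 * (c * f) ^ 2 * (b * d + c * e) := by
  set m₁ := a * d ^ 2 * b + a * d * e * c
  set m₂ := a * e * f * c + b * f ^ 2 * c
  set p := (a * d) ^ 3 + (c * f) ^ 3
  have absorb_ab : (m₁ + m₂) * p ≤ (a * d) ^ 2 * (c * f) ^ 2 * (a * e + b * f) :=
    calc (m₁ + m₂) * p ≤ m₂ * ((a * d) ^ 2 * (c * f) ^ 1) :=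
          mul_le_mul' (min_le_right _ _) (pow_add_add_pow_add_le_pow_mul_pow _ _ 2 1)
      _ = _ := by simp only [m₂]; ring
  have absorb_ba : (m₁ + m₂) * p ≤ (a * d) ^ 2 * (c * f) ^ 2 * (b * d + c * e) :=
    calc (m₁ + m₂) * p ≤ m₁ * ((a * d) ^ 1 * (c * f) ^ 2) :=
          mul_le_mul' (min_le_left _ _) (pow_add_add_pow_add_le_pow_mul_pow _ _ 1 2)
      _ = _ := by simp only [m₁]; ring
  rw [add_eq_left absorb_ab, add_eq_left absorb_ba]

theorem upperTriangular_sandwich_fin_two (a b c d e f : Tropical R) :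
    let A := !![a, b; 0, c]
    let B := !![d, e; 0, f]
    (A * B * B * A) * (A * B) * (A * B * B * A) = (A * B * B * A) * (B * A) * (A * B * B * A) := by
  intro A B
  simp only [A, B, Matrix.mul_fin_two, mul_zero, zero_mul, add_zero, zero_add,
    EmbeddingLike.apply_eq_iff_eq, Matrix.vecCons_inj, and_true, true_and]
  refine ⟨⟨by ring, ?_⟩, by ring⟩
  calc _ = _ := by ring
    _ = _ := sandwich_corner_eq a b c d e f
    _ = _ := by ring

end Tropical

theorem Matrix.eta_fin_two_of_upperTriangular {α : Type*} [Zero α] {A : Matrix (Fin 2) (Fin 2) α}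
    (hA : ∀ i j : Fin 2, j < i → A i j = 0) : A = !![A 0 0, A 0 1; 0, A 1 1] := by
  rw [← hA 1 0 (by decide)]
  exact Matrix.eta_fin_two A

/-- any two upper triangular `2 × 2` tropical matrices satisfy the identity
`AB²A · AB · AB²A = AB²A · BA · AB²A`. -/
theorem two_by_two_triangular_identity (A B : Matrix (Fin 2) (Fin 2) Trop)
    (hA : ∀ i j : Fin 2, j < i → A i j = 0)
    (hB : ∀ i j : Fin 2, j < i → B i j = 0) :
    (A * B * B * A) * (A * B) * (A * B * B * A) =
      (A * B * B * A) * (B * A) * (A * B * B * A) := by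
  rw [Matrix.eta_fin_two_of_upperTriangular hA, Matrix.eta_fin_two_of_upperTriangular hB]
  exact Tropical.upperTriangular_sandwich_fin_two _ _ _ _ _ _
end

section
/- For every n ≥ 1, the number of lists over Fin 2 of length n with no triple repeats (i.e., binary words of length n whose exponent set is contained in {1,2}) equals 2 · Fib(n+1), twice the (n+1)-st Fibonacci number (with Fib(0)=0, Fib(1)=1). -/
/-!
A word avoiding `aaa` is its first run, of length 1 or 2, followed by a shorter such word that
starts with a different letter. Over two letters the letter of the first run is therefore
determined by the rest, so the counts satisfy `a (n + 3) = a (n + 2) + a (n + 1)`, the Fibonacci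
recurrence, with `a 1 = 2` and `a 2 = 4`.
-/

section NoTripleRepeat

variable {α : Type*}

def NoTripleRepeat (l : List α) : Prop := ∀ a, ¬ [a, a, a] <:+: l

theorem noTripleRepeat_of_length_lt_three {l : List α} (hl : l.length < 3) :
    NoTripleRepeat l :=
  fun _ h => by simpa using (h.length_le.trans_lt hl)

theorem noTripleRepeat_cons_iff {a : α} {l : List α} :
    NoTripleRepeat (a :: l) ↔ ¬ [a, a] <+: l ∧ NoTripleRepeat l := by
  simp only [NoTripleRepeat, List.infix_cons_iff, List.cons_prefix_cons, not_or,
    forall_and]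
  refine and_congr ⟨fun h => fun hp => h a ⟨rfl, hp⟩, ?_⟩ Iff.rfl
  rintro h x ⟨rfl, hp⟩
  exact h hp

theorem NoTripleRepeat.of_cons {a : α} {l : List α} (h : NoTripleRepeat (a :: l)) :
    NoTripleRepeat l :=
  (noTripleRepeat_cons_iff.1 h).2

variable (α) in
def noTripleRepeatWords (n : ℕ) : Set (List α) := {l | l.length = n ∧ NoTripleRepeat l}

theorem finite_noTripleRepeatWords [Finite α] (n : ℕ) : (noTripleRepeatWords α n).Finite :=
  (Set.finite_coe_iff.mp (inferInstanceAs (Finite (List.Vector α n)))).subset fun _ hl => hl.1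

theorem ncard_noTripleRepeatWords_of_lt_three [Fintype α] {n : ℕ} (hn : n < 3) :
    (noTripleRepeatWords α n).ncard = Fintype.card α ^ n := by
  have hwords : noTripleRepeatWords α n = {l | l.length = n} :=
    Set.ext fun l => and_iff_left_of_imp fun hl => noTripleRepeat_of_length_lt_three (hl ▸ hn)
  rw [hwords, ← Nat.card_coe_set_eq]
  exact (Nat.card_eq_fintype_card (α := List.Vector α n)).trans (card_vector n)

end NoTripleRepeat

theorem Fin.rev_eq_iff_ne_of_two {a b : Fin 2} : b.rev = a ↔ a ≠ b := by
  revert a b; decide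

def consRun (k : ℕ) (l : List (Fin 2)) : List (Fin 2) := List.replicate k l.headI.rev ++ l

theorem consRun_injective (k : ℕ) : Function.Injective (consRun k) :=
  fun _ _ h => (List.append_inj h (by simp)).2

theorem noTripleRepeatWords_fin_two_add_three (n : ℕ) :
    noTripleRepeatWords (Fin 2) (n + 3) =
      consRun 1 '' noTripleRepeatWords (Fin 2) (n + 2) ∪
        consRun 2 '' noTripleRepeatWords (Fin 2) (n + 1) := by
  ext w
  constructor
  · rintro ⟨hlen, hw⟩
    rcases w with _ | ⟨a, _ | ⟨b, _ | ⟨c, t⟩⟩⟩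
    iterate 3 · simp at hlen
    obtain ⟨hhead, htail⟩ := noTripleRepeat_cons_iff.1 hw
    by_cases hab : a = b
    · subst hab
      have hac : a ≠ c := by simpa using hhead
      refine Or.inr ⟨c :: t, ⟨by simpa using hlen, htail.of_cons⟩, ?_⟩
      simp [consRun, Fin.rev_eq_iff_ne_of_two, hac]
    · refine Or.inl ⟨b :: c :: t, ⟨by simpa using hlen, htail⟩, ?_⟩
      simp [consRun, Fin.rev_eq_iff_ne_of_two, hab]
  · rintro (⟨_ | ⟨b, t⟩, ⟨hlen, hl⟩, rfl⟩ | ⟨_ | ⟨b, t⟩, ⟨hlen, hl⟩, rfl⟩)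
    · simp at hlen
    · refine ⟨by simpa [consRun] using hlen, noTripleRepeat_cons_iff.2 ⟨?_, hl⟩⟩
      simp [Fin.rev_eq_iff_ne_of_two]
    · simp at hlen
    · refine ⟨by simpa [consRun] using hlen, noTripleRepeat_cons_iff.2 ⟨?_, ?_⟩⟩
      · simp [Fin.rev_eq_iff_ne_of_two]
      · exact noTripleRepeat_cons_iff.2 ⟨by simp [Fin.rev_eq_iff_ne_of_two], hl⟩

theorem consRun_one_ne_consRun_two (l l' : List (Fin 2)) : consRun 1 l ≠ consRun 2 l' := by
  rcases l with _ | ⟨b, l⟩ <;> simp [consRun]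
  rintro rfl h -
  exact Fin.rev_eq_iff_ne_of_two.1 h.symm rfl

theorem ncard_noTripleRepeatWords_fin_two_add_three (n : ℕ) :
    (noTripleRepeatWords (Fin 2) (n + 3)).ncard =
      (noTripleRepeatWords (Fin 2) (n + 2)).ncard +
        (noTripleRepeatWords (Fin 2) (n + 1)).ncard := by
  rw [noTripleRepeatWords_fin_two_add_three,
    Set.ncard_union_eq (Set.disjoint_image_image fun l _ l' _ => consRun_one_ne_consRun_two l l')
      ((finite_noTripleRepeatWords _).image _) ((finite_noTripleRepeatWords _).image _),
    Set.ncard_image_of_injective _ (consRun_injective 1),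
    Set.ncard_image_of_injective _ (consRun_injective 2)]

theorem ncard_noTripleRepeatWords_fin_two (n : ℕ) :
    (noTripleRepeatWords (Fin 2) (n + 1)).ncard = 2 * Nat.fib (n + 2) := by
  induction n using Nat.twoStepInduction with
  | zero => simp [ncard_noTripleRepeatWords_of_lt_three]
  | one => simp [ncard_noTripleRepeatWords_of_lt_three, Nat.fib_add_two]
  | more n ih₀ ih₁ =>
    rw [ncard_noTripleRepeatWords_fin_two_add_three, ih₀, ih₁, Nat.fib_add_two (n := n + 2)]
    ring

/-- for `n ≥ 1`, the number of binary words of length `n` with no triple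
repeats (exponent set contained in `{1,2}`) is `2 · Fib (n+1)`. -/
theorem card_no_triple_repeat_words (n : ℕ) (hn : 1 ≤ n) :
    Nat.card {l : List (Fin 2) // l.length = n ∧ ∀ a : Fin 2, ¬ [a, a, a] <:+: l} =
      2 * Nat.fib (n + 1) := by
  obtain ⟨m, rfl⟩ := Nat.exists_eq_add_of_le' hn
  exact (Nat.card_coe_set_eq _).trans (ncard_noTripleRepeatWords_fin_two m)
end

section
/- The word xyxy²x²y is a minimal 3-power word: every list over Fin 2 of length 3 with no triple repeats (namely the six lists corresponding to x²y, xyx, xy², yx², yxy, y²x) is an infix of the list [0,1,0,1,1,0,0,1], and no list over Fin 2 of length strictly less than 8 contains every such length-3 list as an infix. -/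
/-!
A word of length `n` has at most `n - 2` windows of length `3`, one starting at each position,
so containing the six binary words of length `3` without a triple repeat forces `n ≥ 8`.
-/

namespace List

variable {α : Type*} [DecidableEq α]

def infixesOfLength (k : ℕ) (w : List α) : Finset (List α) :=
  (Finset.range (w.length - k + 1)).image fun i => (w.drop i).take k

theorem card_infixesOfLength_le (k : ℕ) (w : List α) :
    (w.infixesOfLength k).card ≤ w.length - k + 1 :=
  Finset.card_image_le.trans (Finset.card_range _).le

theorem IsInfix.mem_infixesOfLength {u w : List α} (h : u <:+: w) :
    u ∈ w.infixesOfLength u.length := by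
  obtain ⟨s, t, rfl⟩ := h
  refine Finset.mem_image.2 ⟨s.length, Finset.mem_range.2 ?_, ?_⟩
  · simp only [length_append]
    omega
  · simp [append_assoc]

theorem card_le_of_forall_isInfix {k : ℕ} {w : List α} (S : Finset (List α))
    (hS : ∀ u ∈ S, u.length = k ∧ u <:+: w) : S.card ≤ w.length - k + 1 := by
  refine le_trans (Finset.card_le_card fun u hu => ?_) (card_infixesOfLength_le k w)
  obtain ⟨hlen, hinf⟩ := hS u hu
  exact hlen ▸ hinf.mem_infixesOfLength

end List

/-- `xyxy²x²y`, i.e. `[0,1,0,1,1,0,0,1]`, is a minimal 3-power word: every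
binary word of length 3 with no triple repeats is an infix of it, and no word of length
`< 8` contains all such length-3 words as infixes. -/
theorem minimal_three_power_word :
    (∀ u : List (Fin 2), u.length = 3 → (∀ a : Fin 2, ¬ [a, a, a] <:+: u) →
      u <:+: ([0, 1, 0, 1, 1, 0, 0, 1] : List (Fin 2))) ∧
    (∀ w : List (Fin 2),
      (∀ u : List (Fin 2), u.length = 3 → (∀ a : Fin 2, ¬ [a, a, a] <:+: u) → u <:+: w) →
      8 ≤ w.length) := by
  constructor
  · intro u hu
    obtain ⟨a, b, c, rfl⟩ := List.length_eq_three.1 hu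
    revert a b c
    decide
  · intro w hw
    let S : Finset (List (Fin 2)) := {[0, 0, 1], [0, 1, 0], [0, 1, 1], [1, 0, 0], [1, 0, 1], [1, 1, 0]}
    have hS_valid : ∀ u ∈ S, u.length = 3 ∧ ∀ a : Fin 2, ¬ [a, a, a] <:+: u := by decide
    have hS_card : S.card = 6 := rfl
    have := List.card_le_of_forall_isInfix S fun u hu =>
      ⟨(hS_valid u hu).1, hw u (hS_valid u hu).1 (hS_valid u hu).2⟩
    omega
end
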